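/- Let k be a non-negative integer, P a finite propositional logic program, and U a model of the theory T₀(P) with |M(U)| ≤ k. Then i_U ≤ k, where i_U = max{i_q : q ∈ M(U)} and i_q is the unique i with c(q,i) ∈ U. -/

import Mathlib

/-!
If `c(q,m)` holds with `m ≥ 2`, the rule supporting `q` at level `m` cannot also support it at
level `m - 1`, so one of its positive atoms first appears exactly at level `m - 1`. Descending,
every level `1, …, m` is occupied by an atom of `M(U)`, and distinct levels carry distinct atoms
because each atom has a unique level. Hence every level is at most `|M(U)| ≤ k`.
-/

open scoped Classical

noncomputable section

/-- A propositional logic program rule: a head atom, a finite positive body and a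
finite negative body. -/
structure LPRule (α : Type) where
  head : α
  pos : Finset α
  neg : Finset α
deriving DecidableEq

/-- A logic program is a finite set of rules. -/
abbrev LProgram (α : Type) := Finset (LPRule α)

variable {α : Type} [DecidableEq α]

/-- `horn r`: the Horn rule with the same head and positive body as `r`
and empty negative body. -/
def LPRule.horn (r : LPRule α) : LPRule α := ⟨r.head, r.pos, ∅⟩

/-- A rule `r` is proper if `h(r) ∉ b⁺(r)` and `b⁺(r) ∩ b⁻(r) = ∅`. -/
def LPRule.proper (r : LPRule α) : Prop := r.head ∉ r.pos ∧ r.pos ∩ r.neg = ∅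

/-- `At(P)`: the set of atoms occurring in `P`. -/
def atomsP (P : LProgram α) : Finset α := P.sup (fun r => insert r.head (r.pos ∪ r.neg))

/-- `h(P)`: the set of heads of rules of `P`. -/
def headsP (P : LProgram α) : Finset α := P.image LPRule.head

/-- `Neg(P)`: the set of atoms occurring negated in `P`. -/
def negP (P : LProgram α) : Finset α := P.sup LPRule.neg

/-- The least model of a (Horn) program `Q`, given as a set of rules (negative bodies
are ignored; Horn rules have empty negative bodies): the least set `M` of atoms such
that `h(r) ∈ M` whenever `r ∈ Q` and `b⁺(r) ⊆ M`. -/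
def LM (Q : Set (LPRule α)) : Set α :=
  ⋂₀ {M : Set α | ∀ r ∈ Q, (↑r.pos : Set α) ⊆ M → r.head ∈ M}

/-- The reduct `P^S`: delete every rule whose negative body meets `S` and remove the
negative bodies of the remaining rules. -/
def reduct (P : LProgram α) (S : Set α) : Set (LPRule α) :=
  LPRule.horn '' {r | r ∈ P ∧ (↑r.neg : Set α) ∩ S = ∅}

/-- `M` is a stable model of `P` if `M = LM (P^M)`. -/
def isStable (P : LProgram α) (M : Set α) : Prop :=
  M = LM (reduct P M)

/-- The propositional atoms of the encoding `T(P)`: for each program atom `q`,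
atoms `c(q)`, `c(q,i)`, `c⁻(q,i)` and `d(q,i)`. -/
inductive EncAtom (α : Type) where
  | c : α → EncAtom α
  | ci : α → ℕ → EncAtom α
  | cm : α → ℕ → EncAtom α
  | d : α → ℕ → EncAtom α
deriving DecidableEq

/-- `U` satisfies `F₁(q,i) = c⁻(q,i) ↔ (c(q,1) ∨ … ∨ c(q,i-1))`. -/
def SatF1 (U : Set (EncAtom α)) (q : α) (i : ℕ) : Prop :=
  EncAtom.cm q i ∈ U ↔ ∃ j, 1 ≤ j ∧ j ≤ i - 1 ∧ EncAtom.ci q j ∈ U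

/-- `U` satisfies `F₂(q) = c(q) ↔ (c(q,1) ∨ … ∨ c(q,k+1))`. -/
def SatF2 (k : ℕ) (U : Set (EncAtom α)) (q : α) : Prop :=
  EncAtom.c q ∈ U ↔ ∃ j, 1 ≤ j ∧ j ≤ k + 1 ∧ EncAtom.ci q j ∈ U

/-- `U` satisfies `F₃(r,i)`; for `i ≥ 2` this is
`c⁻(a₁,i) ∧ … ∧ c⁻(a_s,i) ∧ ¬c(b₁) ∧ … ∧ ¬c(b_t) ∧ ¬c⁻(q,i)`, for `i = 1` it is
`false` when `b⁺(r) ≠ ∅` and `¬c(b₁) ∧ … ∧ ¬c(b_t)` when `b⁺(r) = ∅`. -/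
def SatF3 (U : Set (EncAtom α)) (r : LPRule α) (i : ℕ) : Prop :=
  if i = 1 then r.pos = ∅ ∧ ∀ b ∈ r.neg, EncAtom.c b ∉ U
  else (∀ a ∈ r.pos, EncAtom.cm a i ∈ U) ∧ (∀ b ∈ r.neg, EncAtom.c b ∉ U) ∧
    EncAtom.cm r.head i ∉ U

/-- `U` satisfies `F₄(q,i) = c(q,i) ↔ (F₃(r₁,i) ∨ … ∨ F₃(r_v,i))`, where
`r₁,…,r_v` are all rules of `P` with head `q`. -/
def SatF4 (P : LProgram α) (U : Set (EncAtom α)) (q : α) (i : ℕ) : Prop :=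
  EncAtom.ci q i ∈ U ↔ ∃ r ∈ P, r.head = q ∧ SatF3 U r i

/-- `U` is a model of the theory `T₀(P)`. -/
def ModelT0 (k : ℕ) (P : LProgram α) (U : Set (EncAtom α)) : Prop :=
  (∀ q ∈ atomsP P, ∀ i, 2 ≤ i → i ≤ k + 1 → SatF1 U q i) ∧
  (∀ q ∈ atomsP P, SatF2 k U q) ∧
  (∀ q ∈ atomsP P, ∀ i, 1 ≤ i → i ≤ k + 1 → SatF4 P U q i)

/-- `M(U) = {q ∈ At(P) : c(q) ∈ U}`. -/
def MU (P : LProgram α) (U : Set (EncAtom α)) : Finset α :=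
  (atomsP P).filter (fun q => EncAtom.c q ∈ U)

lemma mem_atomsP_of_mem_pos {P : LProgram α} {r : LPRule α}
    (hr : r ∈ P) {a : α} (ha : a ∈ r.pos) : a ∈ atomsP P :=
  Finset.mem_sup.2 ⟨r, hr, by simp [ha]⟩

namespace ModelT0

variable {k : ℕ} {P : LProgram α} {U : Set (EncAtom α)}
  {q : α} {i j : ℕ}

lemma mem_MU_of_ci_mem (hU : ModelT0 k P U) (hq : q ∈ atomsP P) (hi : 1 ≤ i)
    (hik : i ≤ k + 1) (hci : EncAtom.ci q i ∈ U) : q ∈ MU P U :=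
  Finset.mem_filter.2 ⟨hq, (hU.2.1 q hq).2 ⟨i, hi, hik, hci⟩⟩

lemma cm_mem_of_le (hU : ModelT0 k P U) (hq : q ∈ atomsP P) (hi : 2 ≤ i) (hij : i ≤ j)
    (hjk : j ≤ k + 1) (hcm : EncAtom.cm q i ∈ U) : EncAtom.cm q j ∈ U := by
  obtain ⟨l, hl, hli, hcl⟩ := (hU.1 q hq i hi (by omega)).1 hcm
  exact (hU.1 q hq j (by omega) hjk).2 ⟨l, hl, by omega, hcl⟩

lemma exists_rule_of_ci_mem (hU : ModelT0 k P U) (hq : q ∈ atomsP P) (hi : 2 ≤ i)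
    (hik : i ≤ k + 1) (hci : EncAtom.ci q i ∈ U) :
    ∃ r ∈ P, r.head = q ∧ (∀ a ∈ r.pos, EncAtom.cm a i ∈ U) ∧
      (∀ b ∈ r.neg, EncAtom.c b ∉ U) ∧ EncAtom.cm q i ∉ U := by
  obtain ⟨r, hrP, rfl, hF3⟩ := (hU.2.2 q hq i (by omega) hik).1 hci
  rw [SatF3, if_neg (by omega)] at hF3
  exact ⟨r, hrP, rfl, hF3⟩

lemma ci_notMem_of_lt (hU : ModelT0 k P U) (hq : q ∈ atomsP P) (hj : 1 ≤ j) (hji : j < i)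
    (hik : i ≤ k + 1) (hcj : EncAtom.ci q j ∈ U) : EncAtom.ci q i ∉ U := fun hci =>
  have ⟨_, _, _, _, _, hcm⟩ := hU.exists_rule_of_ci_mem hq (by omega) hik hci
  hcm ((hU.1 q hq i (by omega) hik).2 ⟨j, hj, by omega, hcj⟩)

lemma ci_level_unique (hU : ModelT0 k P U) (hq : q ∈ atomsP P) (hi : 1 ≤ i) (hik : i ≤ k + 1)
    (hj : 1 ≤ j) (hjk : j ≤ k + 1) (hci : EncAtom.ci q i ∈ U) (hcj : EncAtom.ci q j ∈ U) :
    i = j := by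
  rcases lt_trichotomy i j with h | h | h
  · exact absurd hcj (hU.ci_notMem_of_lt hq hi h hjk hci)
  · exact h
  · exact absurd hci (hU.ci_notMem_of_lt hq hj h hik hcj)

lemma exists_ci_pred_mem (hU : ModelT0 k P U) (hq : q ∈ atomsP P) (hi : 2 ≤ i)
    (hik : i ≤ k + 1) (hci : EncAtom.ci q i ∈ U) :
    ∃ a ∈ atomsP P, EncAtom.ci a (i - 1) ∈ U := by
  obtain ⟨r, hrP, rfl, hpos, hneg, hcm⟩ := hU.exists_rule_of_ci_mem hq hi hik hci
  have hF3 : ¬ SatF3 U r (i - 1) := fun h =>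
    hU.ci_notMem_of_lt hq (by omega) (Nat.sub_one_lt (by omega)) hik
      ((hU.2.2 _ hq (i - 1) (by omega) (by omega)).2 ⟨r, hrP, rfl, h⟩) hci
  -- the failure of `F₃(r, i - 1)` can only come from a positive atom not yet at level `i - 1`
  obtain ⟨a, ha, hbelow⟩ :
      ∃ a ∈ r.pos, ∀ j, 1 ≤ j → j < i - 1 → EncAtom.ci a j ∉ U := by
    rcases (by omega : i = 2 ∨ 3 ≤ i) with rfl | hi3
    · rw [SatF3, if_pos rfl] at hF3
      obtain ⟨a, ha⟩ := Finset.nonempty_iff_ne_empty.2 fun he => hF3 ⟨he, hneg⟩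
      exact ⟨a, ha, fun j _ _ => by omega⟩
    · rw [SatF3, if_neg (by omega)] at hF3
      have hcm' : EncAtom.cm r.head (i - 1) ∉ U := fun h =>
        hcm (hU.cm_mem_of_le hq (by omega) (Nat.sub_le i 1) hik h)
      obtain ⟨a, ha, hna⟩ : ∃ a ∈ r.pos, EncAtom.cm a (i - 1) ∉ U := by
        by_contra! h
        exact hF3 ⟨h, hneg, hcm'⟩
      refine ⟨a, ha, fun j hj hji hcj => hna ?_⟩
      exact (hU.1 a (mem_atomsP_of_mem_pos hrP ha) (i - 1) (by omega) (by omega)).2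
        ⟨j, hj, by omega, hcj⟩
  have haP := mem_atomsP_of_mem_pos hrP ha
  obtain ⟨j, hj, hji, hcj⟩ := (hU.1 a haP i hi hik).1 (hpos a ha)
  obtain rfl : j = i - 1 := by
    by_contra hne
    exact hbelow j hj (by omega) hcj
  exact ⟨a, haP, hcj⟩

lemma exists_ci_mem_of_le (hU : ModelT0 k P U) (hj : 1 ≤ j) (hji : j ≤ i) (hik : i ≤ k + 1)
    (hq : q ∈ atomsP P) (hci : EncAtom.ci q i ∈ U) :
    ∃ a ∈ atomsP P, EncAtom.ci a j ∈ U := by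
  induction i, hji using Nat.le_induction generalizing q with
  | base => exact ⟨q, hq, hci⟩
  | succ i hji ih =>
    obtain ⟨a, haP, hca⟩ := hU.exists_ci_pred_mem hq (by omega) hik hci
    exact ih (by omega) haP hca

lemma le_card_MU_of_ci_mem (hU : ModelT0 k P U) (hq : q ∈ atomsP P) (hik : i ≤ k + 1)
    (hci : EncAtom.ci q i ∈ U) : i ≤ (MU P U).card := by
  have hlevel : ∀ j, 1 ≤ j → j ≤ i → ∃ a ∈ atomsP P, EncAtom.ci a j ∈ U :=
    fun j hj hji => hU.exists_ci_mem_of_le hj hji hik hq hci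
  have : Nonempty α := ⟨q⟩
  choose! atomAt hatomAt_mem hatomAt_ci using hlevel
  calc i = (Finset.Icc 1 i).card := by simp
    _ ≤ (MU P U).card := by
      refine Finset.card_le_card_of_injOn atomAt (fun j hj => ?_) fun j hj l hl hjl => ?_
      · rw [Finset.coe_Icc, Set.mem_Icc] at hj
        exact hU.mem_MU_of_ci_mem (hatomAt_mem j hj.1 hj.2) hj.1 (by omega)
          (hatomAt_ci j hj.1 hj.2)
      · rw [Finset.coe_Icc, Set.mem_Icc] at hj hl
        refine hU.ci_level_unique (hatomAt_mem j hj.1 hj.2) hj.1 (by omega) hl.1 (by omega)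
          (hatomAt_ci j hj.1 hj.2) ?_
        exact hjl ▸ hatomAt_ci l hl.1 hl.2

end ModelT0

/-- let `U` be a model of `T₀(P)` with `|M(U)| ≤ k` and, for `q ∈ M(U)`,
let `iq q` be the unique `i` with `1 ≤ i ≤ k+1` and `c(q,i) ∈ U`.  Then
`i_U = max {iq q : q ∈ M(U)} ≤ k`. -/
theorem levels_le (k : ℕ) (P : LProgram α) (U : Set (EncAtom α))
    (hU : ModelT0 k P U) (hcard : (MU P U).card ≤ k) (iq : α → ℕ)
    (hiq : ∀ q ∈ MU P U, 1 ≤ iq q ∧ iq q ≤ k + 1 ∧ EncAtom.ci q (iq q) ∈ U) :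
    ∀ q ∈ MU P U, iq q ≤ k := by
  intro q hq
  obtain ⟨-, hqk, hci⟩ := hiq q hq
  exact (hU.le_card_MU_of_ci_mem (Finset.mem_filter.1 hq).1 hqk hci).trans hcard
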